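/- arXiv:2007.09661 — 3 statements merged into one kernel-verified Lean document; each statement's English description precedes it below -/
import Mathlib

section
/- For nonnegative integer n and real numbers p, q with 0 < p < 1 and q = 1 - p, the sum ∑_{r=0}^{n} C(2n−r, n) (p^{n+1} q^{n−r} + q^{n+1} p^{n−r}) equals 1. -/
/-!
Among independent trials in which `p` succeeds and `q` fails, the `(n+1)`-st failure comes before
the `a`-th success exactly when the first `n + a` trials contain fewer than `a` successes. This turns
each half of the matchbox sum into a lower tail of a binomial distribution on `2n + 1` trials; the
tail for "fewer than `n + 1` successes" and the one for "fewer than `n + 1` failures" are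
complementary, so together they give `(p + q) ^ (2n + 1) = 1`.
-/

open Finset

variable {R : Type*} [CommSemiring R]

def binomialLowerTail (p q : R) (N a : ℕ) : R :=
  ∑ i ∈ range a, (N.choose i : R) * p ^ i * q ^ (N - i)

theorem binomialLowerTail_succ (p q : R) (N a : ℕ) :
    binomialLowerTail p q N (a + 1)
      = binomialLowerTail p q N a + (N.choose a : R) * p ^ a * q ^ (N - a) :=
  sum_range_succ _ a

theorem binomialLowerTail_succ_succ (p q : R) (N a : ℕ) :
    binomialLowerTail p q (N + 1) (a + 1)
      = (p + q) * binomialLowerTail p q N a + (N.choose a : R) * p ^ a * q ^ (N - a + 1) := by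
  have pascal (i : ℕ) : ((N + 1).choose (i + 1) : R) * p ^ (i + 1) * q ^ (N + 1 - (i + 1))
      = p * ((N.choose i : R) * p ^ i * q ^ (N - i))
        + (N.choose (i + 1) : R) * p ^ (i + 1) * q ^ (N + 1 - (i + 1)) := by
    rw [Nat.choose_succ_succ', Nat.cast_add, Nat.add_sub_add_right]
    ring
  have extra_failure (i : ℕ) : (N.choose i : R) * p ^ i * q ^ (N + 1 - i)
      = q * ((N.choose i : R) * p ^ i * q ^ (N - i)) := by
    rcases le_or_gt i N with hi | hi
    · rw [Nat.sub_add_comm hi, pow_succ]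
      ring
    · simp [Nat.choose_eq_zero_of_lt hi]
  calc binomialLowerTail p q (N + 1) (a + 1)
      = p * binomialLowerTail p q N a
          + ∑ i ∈ range (a + 1), (N.choose i : R) * p ^ i * q ^ (N + 1 - i) := by
        rw [binomialLowerTail, sum_range_succ', sum_congr rfl fun i _ => pascal i,
          sum_add_distrib, binomialLowerTail, mul_sum, sum_range_succ' _ a, add_assoc]
        simp
    _ = p * binomialLowerTail p q N a + q * binomialLowerTail p q N (a + 1) := by
        simp_rw [extra_failure, ← mul_sum, binomialLowerTail]
    _ = _ := by
        rw [binomialLowerTail_succ, pow_succ]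
        ring

theorem sum_range_choose_mul_pow_eq_binomialLowerTail {p q : R} (hpq : p + q = 1) (n a : ℕ) :
    ∑ k ∈ range a, ((n + k).choose k : R) * p ^ k * q ^ (n + 1)
      = binomialLowerTail p q (n + a) a := by
  induction a with
  | zero => simp [binomialLowerTail]
  | succ a ih =>
    rw [sum_range_succ, ih, ← add_assoc, binomialLowerTail_succ_succ, hpq, one_mul,
      Nat.add_sub_cancel]

theorem binomialLowerTail_add_binomialLowerTail_swap (p q : R) (a b : ℕ) :
    binomialLowerTail p q (a + b + 1) (a + 1) + binomialLowerTail q p (a + b + 1) (b + 1)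
      = (p + q) ^ (a + b + 1) := by
  have upper : binomialLowerTail q p (a + b + 1) (b + 1)
      = ∑ j ∈ range (b + 1), ((a + b + 1).choose (a + 1 + j) : R) * p ^ (a + 1 + j)
          * q ^ (a + b + 1 - (a + 1 + j)) := by
    rw [binomialLowerTail, ← sum_range_reflect]
    refine sum_congr rfl fun j hj => ?_
    have hj : j ≤ b := Nat.lt_succ_iff.mp (mem_range.mp hj)
    rw [← Nat.choose_symm (by omega : b + 1 - 1 - j ≤ a + b + 1),
      show a + b + 1 - (b + 1 - 1 - j) = a + 1 + j by omega,
      show a + b + 1 - (a + 1 + j) = b + 1 - 1 - j by omega]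
    ring
  rw [upper, binomialLowerTail, ← sum_range_add, add_pow,
    show a + 1 + (b + 1) = a + b + 1 + 1 by omega]
  exact sum_congr rfl fun i _ => by ring

theorem matchbox_normalization_general (n : ℕ) (p q : ℝ)
    (hq : q = 1 - p) :
    ∑ r ∈ Finset.range (n + 1),
      (Nat.choose (2 * n - r) n : ℝ) * (p ^ (n + 1) * q ^ (n - r) + q ^ (n + 1) * p ^ (n - r))
      = 1 := by
  have hpq : p + q = 1 := by rw [hq]; ring
  have hqp : q + p = 1 := by rw [add_comm, hpq]
  have reflect : ∑ r ∈ range (n + 1),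
      (Nat.choose (2 * n - r) n : ℝ) * (p ^ (n + 1) * q ^ (n - r) + q ^ (n + 1) * p ^ (n - r))
      = ∑ k ∈ range (n + 1), ((n + k).choose k : ℝ) * q ^ k * p ^ (n + 1)
        + ∑ k ∈ range (n + 1), ((n + k).choose k : ℝ) * p ^ k * q ^ (n + 1) := by
    rw [← sum_add_distrib, ← sum_range_reflect]
    refine sum_congr rfl fun k hk => ?_
    have hk : k ≤ n := Nat.lt_succ_iff.mp (mem_range.mp hk)
    rw [show 2 * n - (n + 1 - 1 - k) = n + k by omega, show n - (n + 1 - 1 - k) = k by omega,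
      Nat.choose_symm_add]
    ring
  rw [reflect, sum_range_choose_mul_pow_eq_binomialLowerTail hqp,
    sum_range_choose_mul_pow_eq_binomialLowerTail hpq, ← add_assoc,
    binomialLowerTail_add_binomialLowerTail_swap, hqp, one_pow]

theorem matchbox_normalization (n : ℕ) (p q : ℝ) (hp0 : 0 < p) (hp1 : p < 1)
    (hq : q = 1 - p) :
    ∑ r ∈ Finset.range (n + 1),
      (Nat.choose (2 * n - r) n : ℝ) * (p ^ (n + 1) * q ^ (n - r) + q ^ (n + 1) * p ^ (n - r))
      = 1 :=
  matchbox_normalization_general n p q hq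
end

section
/- For positive integer n and real numbers p, q with 0 < p < 1 and q = 1 - p, if S_n^{(1)} = ∑_{r=0}^{n} C(2n−r, n) p^{n+1} q^{n−r}, then S_n^{(1)} = S_{n−1}^{(1)} + p^n q^n C(2n, n) (1/2 − q). -/
/-!
With `k = n - r`, both sums are `p ^ n` times truncations `Tₙ(x) = ∑_{k ≤ n} C(n + k, n) xᵏ` of the
series of `(1 - x)⁻⁽ⁿ⁺¹⁾`, taken at `x = q` (the left one with an extra factor `p = 1 - q`).
Pascal's rule gives the polynomial identity
`(1 - x) Tₙ(x) = Tₙ₋₁(x) + C(2n - 1, n - 1) xⁿ - C(2n, n) xⁿ⁺¹`, and since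
`C(2n, n) = 2 C(2n - 1, n - 1)` the last two terms are `C(2n, n) xⁿ (1/2 - x)`.
-/

open Finset

def truncNegBinomSeries {R : Type*} [Semiring R] (n N : ℕ) (x : R) : R :=
  ∑ k ∈ range N, ((n + k).choose n : R) * x ^ k

section

variable {R : Type*}

theorem truncNegBinomSeries_succ_succ [CommSemiring R] (n N : ℕ) (x : R) :
    truncNegBinomSeries (n + 1) (N + 1) x
      = truncNegBinomSeries n (N + 1) x + x * truncNegBinomSeries (n + 1) N x := by
  have pascal : ∀ k, ((n + 1 + (k + 1)).choose (n + 1) : R)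
      = (n + (k + 1)).choose n + (n + 1 + k).choose (n + 1) := fun k => by
    rw [show n + 1 + (k + 1) = n + (k + 1) + 1 by omega, Nat.choose_succ_succ',
      show n + (k + 1) = n + 1 + k by omega, Nat.cast_add]
  simp only [truncNegBinomSeries, sum_range_succ' _ N, pascal, add_mul, sum_add_distrib, mul_sum,
    pow_succ', mul_left_comm x, Nat.choose_self, add_zero]
  ring

theorem one_sub_mul_truncNegBinomSeries [CommRing R] (n : ℕ) (x : R) :
    (1 - x) * truncNegBinomSeries (n + 1) (n + 2) x
      = truncNegBinomSeries n (n + 1) x + ((2 * n + 1).choose n : R) * x ^ (n + 1)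
        - ((2 * n + 2).choose (n + 1) : R) * x ^ (n + 2) := by
  have h := truncNegBinomSeries_succ_succ n (n + 1) x
  simp only [truncNegBinomSeries, sum_range_succ _ (n + 1)] at h ⊢
  rw [show n + (n + 1) = 2 * n + 1 by omega] at h
  rw [show n + 1 + (n + 1) = 2 * n + 2 by omega] at h ⊢
  linear_combination h

theorem sum_range_choose_two_mul_sub_mul_pow_sub [Semiring R] (n : ℕ) (x : R) :
    ∑ r ∈ range (n + 1), ((2 * n - r).choose n : R) * x ^ (n - r)
      = truncNegBinomSeries n (n + 1) x := by
  rw [truncNegBinomSeries, ← sum_range_reflect]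
  refine sum_congr rfl fun r hr => ?_
  rw [mem_range] at hr
  rw [show 2 * n - (n + 1 - 1 - r) = n + r by omega, show n - (n + 1 - 1 - r) = r by omega]

end

theorem Nat.choose_two_mul_add_two_eq_two_mul (n : ℕ) :
    (2 * n + 2).choose (n + 1) = 2 * (2 * n + 1).choose n := by
  rw [Nat.choose_succ_succ', Nat.choose_symm_half, ← two_mul]

theorem matchbox_recurrence_general (n : ℕ) (hn : 1 ≤ n) (p q : ℝ)
    (hq : q = 1 - p) :
    ∑ r ∈ Finset.range (n + 1), (Nat.choose (2 * n - r) n : ℝ) * p ^ (n + 1) * q ^ (n - r)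
      = (∑ r ∈ Finset.range n,
          (Nat.choose (2 * (n - 1) - r) (n - 1) : ℝ) * p ^ n * q ^ (n - 1 - r))
        + p ^ n * q ^ n * (Nat.choose (2 * n) n : ℝ) * (1 / 2 - q) := by
  obtain ⟨m, rfl⟩ := Nat.exists_eq_add_of_le' hn
  simp only [Nat.add_sub_cancel, mul_right_comm _ (p ^ _), ← sum_mul,
    sum_range_choose_two_mul_sub_mul_pow_sub]
  have recurrence := one_sub_mul_truncNegBinomSeries m q
  have central : ((2 * m + 2).choose (m + 1) : ℝ) = 2 * (2 * m + 1).choose m := by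
    exact_mod_cast Nat.choose_two_mul_add_two_eq_two_mul m
  rw [show 2 * (m + 1) = 2 * m + 2 by ring]
  subst hq
  linear_combination p ^ (m + 1) * recurrence - p ^ (m + 1) * (1 - p) ^ (m + 1) / 2 * central

theorem matchbox_recurrence (n : ℕ) (hn : 1 ≤ n) (p q : ℝ) (hp0 : 0 < p) (hp1 : p < 1)
    (hq : q = 1 - p) :
    ∑ r ∈ Finset.range (n + 1), (Nat.choose (2 * n - r) n : ℝ) * p ^ (n + 1) * q ^ (n - r)
      = (∑ r ∈ Finset.range n,
          (Nat.choose (2 * (n - 1) - r) (n - 1) : ℝ) * p ^ n * q ^ (n - 1 - r))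
        + p ^ n * q ^ n * (Nat.choose (2 * n) n : ℝ) * (1 / 2 - q) :=
  matchbox_recurrence_general n hn p q hq
end

section
/- For nonnegative integer n and real numbers p, q with 0 < p < 1 and q = 1 - p, the identity p · ∑_{r=0}^{n} [(−n)_r (1)_r / ((−2n)_r r!)] q^{−r} + q · ∑_{r=0}^{n} [(−n)_r (1)_r / ((−2n)_r r!)] p^{−r} = (n!)^2 / (p^n q^n (2n)!) holds, where (a)_r denotes the Pochhammer symbol (rising factorial) and the summand for each r ≤ n is interpreted via the ratio (−n)_r/(−2n)_r = [n!/(n−r)!] · [(2n−r)!/(2n)!]. -/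
/-!
Reversing the order of summation (`r = n - k`) turns each sum into
`(n!)² / ((2n)! xⁿ) · Sₙ(x)` with `Sₙ(x) = ∑_{k ≤ n} C(n+k, k) xᵏ`, a truncation of the series
of `(1 - x)^{-(n+1)}`. The identity thus becomes `p^{n+1} Sₙ(q) + q^{n+1} Sₙ(p) = 1` for
`p + q = 1`: the probability that one of two players, winning each round with probabilities `p`
and `q`, is the first to win `n + 1` rounds. This follows by induction on `n` from Pascal's rule
in the form `(1 - x) S_{n+1}(x) = Sₙ(x) + C(2n+1, n+1) x^{n+1} (1 - 2x)`, whose correction terms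
cancel in the sum because `(1 - 2q) + (1 - 2p) = 0`.
-/

open Finset

section

variable {R : Type*} [CommRing R]

def negBinomialPartialSum (n : ℕ) (x : R) : R :=
  ∑ k ∈ range (n + 1), ((n + k).choose k : R) * x ^ k

theorem negBinomialPartialSum_succ_eq_pascal (n : ℕ) (x : R) :
    negBinomialPartialSum (n + 1) x
      = ∑ k ∈ range (n + 2), ((n + k).choose k : R) * x ^ k
        + x * ∑ k ∈ range (n + 1), ((n + 1 + k).choose k : R) * x ^ k := by
  have hpascal (k : ℕ) : ((n + 1 + (k + 1)).choose (k + 1) : R) * x ^ (k + 1)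
      = ((n + (k + 1)).choose (k + 1) : R) * x ^ (k + 1)
        + x * (((n + 1 + k).choose k) * x ^ k) := by
    rw [show n + 1 + (k + 1) = n + 1 + k + 1 by omega, Nat.choose_succ_succ',
      show n + (k + 1) = n + 1 + k by omega]
    push_cast; ring
  rw [negBinomialPartialSum, sum_range_succ', sum_range_succ' _ (n + 1), mul_sum,
    sum_congr rfl fun k _ => hpascal k, sum_add_distrib]
  simp only [add_zero, Nat.choose_zero_right]
  ring

theorem sub_mul_negBinomialPartialSum_succ (n : ℕ) (x : R) :
    (1 - x) * negBinomialPartialSum (n + 1) x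
      = negBinomialPartialSum n x
        + ((2 * n + 1).choose (n + 1) : R) * x ^ (n + 1) * (1 - 2 * x) := by
  have hpascal := negBinomialPartialSum_succ_eq_pascal n x
  have hlast : negBinomialPartialSum (n + 1) x
      = ∑ k ∈ range (n + 1), ((n + 1 + k).choose k : R) * x ^ k
        + ((2 * n + 2).choose (n + 1) : R) * x ^ (n + 1) := by
    rw [negBinomialPartialSum, sum_range_succ, show n + 1 + (n + 1) = 2 * n + 2 by omega]
  have hcentral : ((2 * n + 2).choose (n + 1) : R) = 2 * (2 * n + 1).choose (n + 1) := by
    rw [show 2 * n + 2 = (2 * n + 1) + 1 by omega, Nat.choose_succ_succ', ← Nat.choose_symm_half]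
    push_cast; ring
  rw [sum_range_succ, ← negBinomialPartialSum, show n + (n + 1) = 2 * n + 1 by omega] at hpascal
  rw [hcentral] at hlast
  linear_combination hpascal - x * hlast

theorem pow_mul_negBinomialPartialSum_add (n : ℕ) {p q : R} (h : p + q = 1) :
    p ^ (n + 1) * negBinomialPartialSum n q + q ^ (n + 1) * negBinomialPartialSum n p = 1 := by
  obtain rfl : q = 1 - p := by linear_combination h
  induction n with
  | zero => simp [negBinomialPartialSum]
  | succ n ih =>
    have hq := sub_mul_negBinomialPartialSum_succ n (1 - p)
    have hp := sub_mul_negBinomialPartialSum_succ n p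
    linear_combination p ^ (n + 1) * hq + (1 - p) ^ (n + 1) * hp + ih

end

theorem sum_factorial_ratio_mul_inv_pow {K : Type*} [Field K] [CharZero K] (n : ℕ) {x : K}
    (hx : x ≠ 0) :
    ∑ r ∈ range (n + 1),
        ((n.factorial : K) / (n - r).factorial) * ((2 * n - r).factorial / (2 * n).factorial)
          * x⁻¹ ^ r
      = (n.factorial : K) ^ 2 / ((2 * n).factorial * x ^ n) * negBinomialPartialSum n x := by
  rw [← sum_range_reflect, negBinomialPartialSum, mul_sum]
  refine sum_congr rfl fun k hk => ?_
  have hkn : k ≤ n := Nat.lt_succ_iff.mp (mem_range.mp hk)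
  rw [show n + 1 - 1 - k = n - k by omega, show n - (n - k) = k by omega,
    show 2 * n - (n - k) = n + k by omega, ← Nat.add_choose_mul_factorial_mul_factorial,
    ← pow_sub_mul_pow x hkn, inv_pow]
  push_cast
  field_simp [Nat.cast_ne_zero.mpr k.factorial_ne_zero]

theorem hypergeometric_identity (n : ℕ) (p q : ℝ) (hp0 : 0 < p) (hp1 : p < 1)
    (hq : q = 1 - p) :
    p * ∑ r ∈ Finset.range (n + 1),
        ((n.factorial : ℝ) / (n - r).factorial) * ((2 * n - r).factorial / (2 * n).factorial)
          * q⁻¹ ^ r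
      + q * ∑ r ∈ Finset.range (n + 1),
        ((n.factorial : ℝ) / (n - r).factorial) * ((2 * n - r).factorial / (2 * n).factorial)
          * p⁻¹ ^ r
      = (n.factorial : ℝ) ^ 2 / (p ^ n * q ^ n * (2 * n).factorial) := by
  have hp : p ≠ 0 := hp0.ne'
  have hq0 : q ≠ 0 := hq ▸ (sub_pos.mpr hp1).ne'
  have key := pow_mul_negBinomialPartialSum_add n (by rw [hq]; ring : p + q = 1)
  rw [sum_factorial_ratio_mul_inv_pow n hq0, sum_factorial_ratio_mul_inv_pow n hp]
  field_simp
  linear_combination key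
end
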